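/- Let d = 3 and suppose q = (q̄, q_n(q̄)) is a normalized central configuration satisfying the normalization y_{n−1} = z_{n−1} = z_{n−2} = 0. Assume x_{n−1} − x_n ≠ 0, x_{n−1} ≠ 0, y_{n−2} ≠ 0, and det [[y_{n−2} − y_n, y_{n−1} − y_n], [x_{n−2} − x_n, x_{n−1} − x_n]] ≠ 0. Then the rank of the Jacobian matrix D RS at the corresponding point equals the rank of DF^red(q̄). -/

import Mathlib

open scoped BigOperators

noncomputable section

/-- Points in `ℝ^d`, with the Euclidean norm. -/
abbrev Pt (d : ℕ) := EuclideanSpace ℝ (Fin d)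

/-- `F_i(q) = −q_i + Σ_{j ≠ i} m_j (q_j − q_i)/‖q_j − q_i‖³`. -/
noncomputable def nbodyF {d n : ℕ} (m : Fin n → ℝ) (q : Fin n → Pt d) : Fin n → Pt d :=
  fun i => -q i + ∑ j ∈ Finset.univ.erase i, (m j / ‖q j - q i‖ ^ 3) • (q j - q i)

/-- A configuration is collision-free if all bodies occupy distinct positions. -/
def CollisionFree {d n : ℕ} (q : Fin n → Pt d) : Prop :=
  ∀ i j, i ≠ j → q i ≠ q j

/-- A normalized central configuration: collision-free, center of mass at the origin,
and `F(q) = 0`. -/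
def IsNCC {d n : ℕ} (m : Fin n → ℝ) (q : Fin n → Pt d) : Prop :=
  CollisionFree q ∧ (∑ i, m i • q i) = 0 ∧ nbodyF m q = 0

/-- Embedding of the reduced index set `{1,…,n−1}` into `{1,…,n}`. -/
def emb {n : ℕ} (i : Fin (n - 1)) : Fin n := Fin.castLE (Nat.sub_le n 1) i

/-- Extend a reduced configuration `q̄ = (q_1,…,q_{n−1})` by the position of the last body,
`q_n(q̄) = −(1/m_n) Σ_{i<n} m_i q_i`, computed from the center of mass condition. -/
noncomputable def extendConfig {d n : ℕ} (m : Fin n → ℝ) (qbar : Fin (n - 1) → Pt d) :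
    Fin n → Pt d :=
  fun i => if h : (i : ℕ) < n - 1 then qbar ⟨i, h⟩
    else (-(1 / m i)) • ∑ j : Fin (n - 1), m (emb j) • qbar j

/-- The center-of-mass reduced map `F^red_i(q̄) = F_i(q_1,…,q_{n−1},q_n(q̄))`, `i = 1,…,n−1`. -/
noncomputable def Fred {d n : ℕ} (m : Fin n → ℝ) (qbar : Fin (n - 1) → Pt d) :
    Fin (n - 1) → Pt d :=
  fun i => nbodyF m (extendConfig m qbar) (emb i)

/-- The Jacobian matrix of `F`, rows and columns indexed by (body, coordinate). -/
noncomputable def jacF {d n : ℕ} (m : Fin n → ℝ) (q : Fin n → Pt d) :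
    Matrix (Fin n × Fin d) (Fin n × Fin d) ℝ :=
  fun p p' =>
    fderiv ℝ (fun q' : Fin n → Pt d => nbodyF m q' p.1 p.2) q
      (Pi.single p'.1 (EuclideanSpace.single p'.2 (1 : ℝ)))

/-- The Jacobian matrix of `F^red`, rows and columns indexed by (body, coordinate). -/
noncomputable def jacFred {d n : ℕ} (m : Fin n → ℝ) (qbar : Fin (n - 1) → Pt d) :
    Matrix (Fin (n - 1) × Fin d) (Fin (n - 1) × Fin d) ℝ :=
  fun p p' =>
    fderiv ℝ (fun q' : Fin (n - 1) → Pt d => Fred m q' p.1 p.2) qbar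
      (Pi.single p'.1 (EuclideanSpace.single p'.2 (1 : ℝ)))

/-- The Jacobian matrix of the spatial reduced system `RS`: it is obtained from `DF^red`
by removing the rows corresponding to `F^red_{n−1,y}`, `F^red_{n−1,z}`, `F^red_{n−2,z}` and
the columns corresponding to the variables `y_{n−1}`, `z_{n−1}`, `z_{n−2}`
(here `x = 0`, `y = 1`, `z = 2`; the bodies of paper-index `n−1`, `n−2` are `⟨n−2,_⟩`, `⟨n−3,_⟩`). -/
noncomputable def DRS3 {n : ℕ} (hn : 4 ≤ n) (m : Fin n → ℝ) (qbar : Fin (n - 1) → Pt 3) :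
    Matrix
      {p : Fin (n - 1) × Fin 3 //
        p ≠ (⟨n - 2, by omega⟩, 1) ∧ p ≠ (⟨n - 2, by omega⟩, 2) ∧ p ≠ (⟨n - 3, by omega⟩, 2)}
      {p : Fin (n - 1) × Fin 3 //
        p ≠ (⟨n - 2, by omega⟩, 1) ∧ p ≠ (⟨n - 2, by omega⟩, 2) ∧ p ≠ (⟨n - 3, by omega⟩, 2)} ℝ :=
  (jacFred m qbar).submatrix Subtype.val Subtype.val



/-! ### Auxiliary machinery -/

namespace Stmt10Aux

open Matrix

variable {d n : ℕ}

/-- coordinate helpers -/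
lemma coord_sum {k : ℕ} {ι : Type*} (s : Finset ι) (f : ι → Pt k) (c : Fin k) :
    (∑ i ∈ s, f i) c = ∑ i ∈ s, f i c :=
  map_sum (EuclideanSpace.proj (𝕜 := ℝ) c) f s

lemma coord_smul {k : ℕ} (a : ℝ) (x : Pt k) (c : Fin k) : (a • x) c = a * x c := rfl
lemma coord_sub {k : ℕ} (x y : Pt k) (c : Fin k) : (x - y) c = x c - y c := rfl
lemma coord_neg {k : ℕ} (x : Pt k) (c : Fin k) : (-x) c = -(x c) := rfl
lemma coord_add {k : ℕ} (x y : Pt k) (c : Fin k) : (x + y) c = x c + y c := rfl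
lemma coord_zero {k : ℕ} (c : Fin k) : (0 : Pt k) c = 0 := rfl

/-- `extendConfig` as a continuous linear map. -/
noncomputable def extendCLM (m : Fin n → ℝ) (i : Fin n) :
    (Fin (n - 1) → Pt d) →L[ℝ] Pt d :=
  if h : (i : ℕ) < n - 1 then ContinuousLinearMap.proj ⟨i, h⟩
  else (-(1 / m i)) • ∑ j : Fin (n - 1), m (emb j) • ContinuousLinearMap.proj j

lemma extendConfig_apply (m : Fin n → ℝ) (qbar : Fin (n - 1) → Pt d) (i : Fin n) :
    extendConfig m qbar i = extendCLM m i qbar := by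
  unfold extendConfig extendCLM
  split
  · rfl
  · simp [ContinuousLinearMap.sum_apply]

lemma extendConfig_emb (m : Fin n → ℝ) (qbar : Fin (n - 1) → Pt d) (i : Fin (n - 1)) :
    extendConfig m qbar (emb i) = qbar i := by
  unfold extendConfig
  rw [dif_pos (show ((emb i : Fin n) : ℕ) < n - 1 from i.isLt)]
  congr 1

lemma Fred_eq (m : Fin n → ℝ) (qbar : Fin (n - 1) → Pt d) (i : Fin (n - 1)) :
    Fred m qbar i = -(extendCLM m (emb i) qbar) + ∑ j ∈ Finset.univ.erase (emb i),
      (m j / ‖extendCLM m j qbar - extendCLM m (emb i) qbar‖ ^ 3) •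
        (extendCLM m j qbar - extendCLM m (emb i) qbar) := by
  simp only [Fred, nbodyF, extendConfig_apply]

lemma diffAt_Fred (m : Fin n → ℝ) {qbar : Fin (n - 1) → Pt d}
    (hq : CollisionFree (extendConfig m qbar)) (i : Fin (n - 1)) :
    DifferentiableAt ℝ (fun q' => Fred m q' i) qbar := by
  have heq : (fun q' : Fin (n-1) → Pt d => Fred m q' i) = fun q' =>
      -(extendCLM m (emb i) q') + ∑ j ∈ Finset.univ.erase (emb i),
        (m j / ‖extendCLM m j q' - extendCLM m (emb i) q'‖ ^ 3) •
          (extendCLM m j q' - extendCLM m (emb i) q') := funext fun q' => Fred_eq m q' i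
  rw [heq]
  apply DifferentiableAt.add
  · exact ((extendCLM m (emb i)).differentiableAt).neg
  · apply DifferentiableAt.fun_sum
    intro j hj
    have hsub : DifferentiableAt ℝ (fun q' => extendCLM m j q' - extendCLM m (emb i) q') qbar :=
      ((extendCLM m j).differentiableAt).sub ((extendCLM m (emb i)).differentiableAt)
    have hne : extendCLM m j qbar - extendCLM m (emb i) qbar ≠ 0 := by
      rw [← extendConfig_apply, ← extendConfig_apply]
      exact sub_ne_zero.2 (hq j (emb i) (Finset.ne_of_mem_erase hj))
    have hnorm : DifferentiableAt ℝ
        (fun q' => ‖extendCLM m j q' - extendCLM m (emb i) q'‖) qbar :=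
      DifferentiableAt.norm ℝ hsub hne
    have hnz : ‖extendCLM m j qbar - extendCLM m (emb i) qbar‖ ^ 3 ≠ 0 :=
      pow_ne_zero 3 (norm_ne_zero_iff.2 hne)
    exact (((hnorm.pow 3).inv hnz).const_mul (m j)).smul hsub

lemma diffAt_Fred_coord (m : Fin n → ℝ) {qbar : Fin (n - 1) → Pt d}
    (hq : CollisionFree (extendConfig m qbar)) (i : Fin (n - 1)) (c : Fin d) :
    DifferentiableAt ℝ (fun q' => Fred m q' i c) qbar :=
  (EuclideanSpace.proj (𝕜 := ℝ) c).differentiableAt.comp qbar (diffAt_Fred m hq i)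

lemma pt_decomp {N k : ℕ} (w : Fin N → Pt k) :
    w = ∑ j : Fin N, ∑ c : Fin k, (w j c) • (Pi.single j (EuclideanSpace.single c (1:ℝ)) : Fin N → Pt k) := by
  funext j'
  simp only [Finset.sum_apply, Pi.smul_apply, Pi.single_apply]
  have h1 : ∀ j : Fin N, (∑ c : Fin k, w j c • (if j' = j then EuclideanSpace.single c (1:ℝ)
      else 0)) = if j' = j then ∑ c : Fin k, w j c • EuclideanSpace.single c (1:ℝ) else 0 := by
    intro j
    by_cases h : j' = j <;> simp [h]
  rw [Finset.sum_congr rfl fun j _ => h1 j, Finset.sum_ite_eq]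
  simp only [Finset.mem_univ, if_true]
  ext c'
  rw [coord_sum]
  simp only [coord_smul, EuclideanSpace.single_apply, mul_ite, mul_one, mul_zero]
  rw [Finset.sum_ite_eq]
  simp

lemma fderiv_decomp {N k : ℕ} (f : (Fin N → Pt k) → ℝ) (x : Fin N → Pt k)
    (w : Fin N → Pt k) :
    fderiv ℝ f x w = ∑ j : Fin N, ∑ c : Fin k,
      w j c * fderiv ℝ f x (Pi.single j (EuclideanSpace.single c (1:ℝ))) := by
  conv_lhs => rw [pt_decomp w]
  rw [map_sum]
  refine Finset.sum_congr rfl fun j _ => ?_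
  rw [map_sum]
  refine Finset.sum_congr rfl fun c _ => ?_
  rw [_root_.map_smul]
  rfl

/-! ### Equivariance under norm-preserving linear maps -/

lemma nbodyF_equivariant (m : Fin n → ℝ) (q : Fin n → Pt d) (L : Pt d →ₗ[ℝ] Pt d)
    (hL : ∀ v, ‖L v‖ = ‖v‖) (i : Fin n) :
    nbodyF m (fun j => L (q j)) i = L (nbodyF m q i) := by
  unfold nbodyF
  rw [map_add, map_neg, map_sum]
  congr 1
  refine Finset.sum_congr rfl fun j hj => ?_
  conv_lhs => rw [← map_sub L, hL]
  rw [_root_.map_smul, map_sub]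

lemma extendConfig_map (m : Fin n → ℝ) (qbar : Fin (n - 1) → Pt d)
    (L : Pt d →ₗ[ℝ] Pt d) (i : Fin n) :
    extendConfig m (fun j => L (qbar j)) i = L (extendConfig m qbar i) := by
  unfold extendConfig
  split
  · rfl
  · rw [_root_.map_smul, map_sum]
    congr 1
    exact Finset.sum_congr rfl fun j _ => (_root_.map_smul L _ _).symm

lemma Fred_equivariant (m : Fin n → ℝ) (qbar : Fin (n - 1) → Pt d)
    (L : Pt d →ₗ[ℝ] Pt d) (hL : ∀ v, ‖L v‖ = ‖v‖) (i : Fin (n - 1)) :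
    Fred m (fun j => L (qbar j)) i = L (Fred m qbar i) := by
  unfold Fred
  rw [show extendConfig m (fun j => L (qbar j)) = fun k => L (extendConfig m qbar k)
    from funext (extendConfig_map m qbar L)]
  exact nbodyF_equivariant m _ L hL _

/-! ### Planar rotations -/

/-- Rotation by angle `t` in the `(a,b)` coordinate plane, on plain functions. -/
noncomputable def rotF (a b : Fin 3) (t : ℝ) : (Fin 3 → ℝ) →ₗ[ℝ] (Fin 3 → ℝ) where
  toFun x c := if c = a then Real.cos t * x a - Real.sin t * x b
    else if c = b then Real.sin t * x a + Real.cos t * x b else x c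
  map_add' x y := by
    funext c
    simp only [Pi.add_apply]
    split_ifs <;> ring
  map_smul' r x := by
    funext c
    simp only [Pi.smul_apply, smul_eq_mul, RingHom.id_apply]
    split_ifs <;> ring

/-- Rotation as a linear map on `Pt 3`. -/
noncomputable def rotL (a b : Fin 3) (t : ℝ) : Pt 3 →ₗ[ℝ] Pt 3 :=
  ((EuclideanSpace.equiv (Fin 3) ℝ).symm.toLinearEquiv.toLinearMap.comp
    (rotF a b t)).comp (EuclideanSpace.equiv (Fin 3) ℝ).toLinearEquiv.toLinearMap

lemma rotL_apply (a b : Fin 3) (t : ℝ) (x : Pt 3) (c : Fin 3) :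
    rotL a b t x c = if c = a then Real.cos t * x a - Real.sin t * x b
      else if c = b then Real.sin t * x a + Real.cos t * x b else x c := rfl

lemma rotL_norm (a b : Fin 3) (hab : a ≠ b) (t : ℝ) (x : Pt 3) : ‖rotL a b t x‖ = ‖x‖ := by
  rw [EuclideanSpace.norm_eq, EuclideanSpace.norm_eq]
  congr 1
  fin_cases a <;> fin_cases b <;> simp_all [rotL_apply, Fin.sum_univ_three,
      Real.norm_eq_abs, sq_abs] <;> ring_nf <;> nlinarith [Real.sin_sq_add_cos_sq t]

lemma rotL_zero (a b : Fin 3) (x : Pt 3) : rotL a b 0 x = x := by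
  ext c
  rw [rotL_apply]
  split_ifs with h1 h2
  · subst h1; simp
  · subst h2; simp
  · rfl

/-- The infinitesimal generator of `rotL a b`. -/
noncomputable def rotA (a b : Fin 3) (x : Pt 3) : Pt 3 :=
  (WithLp.equiv 2 (Fin 3 → ℝ)).symm fun c => if c = a then -x b else if c = b then x a else 0

lemma rotA_apply (a b : Fin 3) (x : Pt 3) (c : Fin 3) :
    rotA a b x c = if c = a then -x b else if c = b then x a else 0 := rfl

lemma hasDerivAt_pi' {ι : Type*} [Fintype ι] {F : ι → Type*} [∀ i, NormedAddCommGroup (F i)]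
    [∀ i, NormedSpace ℝ (F i)] {f : ℝ → ∀ i, F i} {f' : ∀ i, F i} {t : ℝ}
    (h : ∀ i, HasDerivAt (fun s => f s i) (f' i) t) : HasDerivAt f f' t := by
  rw [hasDerivAt_iff_hasFDerivAt]
  apply hasFDerivAt_pi''
  intro i
  have hi := (h i).hasFDerivAt
  exact hi

lemma hasDerivAt_rotcurve {N : ℕ} (a b : Fin 3) (q : Fin N → Pt 3) :
    HasDerivAt (fun t => fun j => rotL a b t (q j)) (fun j => rotA a b (q j)) 0 := by
  apply hasDerivAt_pi'
  intro j
  have hg : HasDerivAt (fun t => fun c : Fin 3 =>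
        if c = a then Real.cos t * q j a - Real.sin t * q j b
        else if c = b then Real.sin t * q j a + Real.cos t * q j b else q j c)
      (fun c => if c = a then -(q j b) else if c = b then q j a else 0) 0 := by
    apply hasDerivAt_pi'
    intro c
    by_cases h1 : c = a
    · simp only [if_pos h1]
      have := ((Real.hasDerivAt_cos 0).mul_const (q j a)).sub
        ((Real.hasDerivAt_sin 0).mul_const (q j b))
      convert this using 1
      · rfl
      · simp
    · by_cases h2 : c = b
      · simp only [if_neg h1, if_pos h2]
        have := ((Real.hasDerivAt_sin 0).mul_const (q j a)).add
          ((Real.hasDerivAt_cos 0).mul_const (q j b))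
        convert this using 1
        · rfl
        · simp
      · simp only [if_neg h1, if_neg h2]
        exact hasDerivAt_const 0 _
  have := (((EuclideanSpace.equiv (Fin 3) ℝ).symm :
      (Fin 3 → ℝ) →L[ℝ] Pt 3).hasFDerivAt).comp_hasDerivAt 0 hg
  exact this

lemma right_kernel (m : Fin n → ℝ) {qbar : Fin (n - 1) → Pt 3}
    (hq : CollisionFree (extendConfig m qbar)) (hF : ∀ i, Fred m qbar i = 0)
    (a b : Fin 3) (hab : a ≠ b) (i : Fin (n - 1)) (k : Fin 3) :
    fderiv ℝ (fun q' => Fred m q' i k) qbar (fun j => rotA a b (qbar j)) = 0 := by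
  set f : (Fin (n-1) → Pt 3) → ℝ := fun q' => Fred m q' i k with hf
  have hdf : DifferentiableAt ℝ f qbar := diffAt_Fred_coord m hq i k
  have hc : HasDerivAt (fun t => fun j => rotL a b t (qbar j))
      (fun j => rotA a b (qbar j)) 0 := hasDerivAt_rotcurve a b qbar
  have hc0 : (fun j => rotL a b 0 (qbar j)) = qbar := funext fun j => rotL_zero a b (qbar j)
  have hdf' : HasFDerivAt f (fderiv ℝ f qbar) (fun j => rotL a b 0 (qbar j)) := by
    rw [hc0]; exact hdf.hasFDerivAt
  have hcomp : HasDerivAt (f ∘ (fun t => fun j => rotL a b t (qbar j)))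
      (fderiv ℝ f qbar (fun j => rotA a b (qbar j))) 0 := hdf'.comp_hasDerivAt 0 hc
  have hzero : (f ∘ (fun t => fun j => rotL a b t (qbar j))) = fun _ => 0 := by
    funext t
    show Fred m (fun j => rotL a b t (qbar j)) i k = 0
    rw [Fred_equivariant m qbar (rotL a b t) (rotL_norm a b hab t) i, hF i, map_zero]
    rfl
  rw [hzero] at hcomp
  exact hcomp.unique (hasDerivAt_const 0 0)

lemma jacFred_mulVec_rot (m : Fin n → ℝ) {qbar : Fin (n - 1) → Pt 3}
    (hq : CollisionFree (extendConfig m qbar)) (hF : ∀ i, Fred m qbar i = 0)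
    (a b : Fin 3) (hab : a ≠ b) :
    (jacFred m qbar).mulVec (fun p => rotA a b (qbar p.1) p.2) = 0 := by
  funext p
  obtain ⟨i, k⟩ := p
  simp only [Matrix.mulVec, dotProduct, Pi.zero_apply]
  rw [Fintype.sum_prod_type]
  have h := right_kernel m hq hF a b hab i k
  rw [fderiv_decomp (fun q' => Fred m q' i k) qbar (fun j => rotA a b (qbar j))] at h
  rw [← h]
  exact Finset.sum_congr rfl fun j _ => Finset.sum_congr rfl fun c _ => mul_comm _ _

/-! ### Sum identities -/

lemma sum_erase_antisymm {N : ℕ} (g : Fin N → Fin N → ℝ) (hg : ∀ i j, g i j = - g j i) :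
    ∑ i, ∑ j ∈ Finset.univ.erase i, g i j = 0 := by
  have hcomm : ∑ i, ∑ j ∈ Finset.univ.erase i, g i j
      = ∑ j, ∑ i ∈ Finset.univ.erase j, g i j := by
    apply Finset.sum_comm'
    intro x y
    simp [Finset.mem_erase, ne_comm, and_comm, eq_comm]
  have h2 : ∑ i, ∑ j ∈ Finset.univ.erase i, g i j
      = - ∑ i, ∑ j ∈ Finset.univ.erase i, g i j := by
    conv_lhs => rw [hcomm]
    rw [← Finset.sum_neg_distrib]
    refine Finset.sum_congr rfl fun j _ => ?_
    rw [← Finset.sum_neg_distrib]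
    exact Finset.sum_congr rfl fun i _ => hg i j
  linarith

lemma nbodyF_coord (m : Fin n → ℝ) (q : Fin n → Pt d) (i : Fin n) (c : Fin d) :
    nbodyF m q i c = -(q i c) + ∑ j ∈ Finset.univ.erase i,
      (m j / ‖q j - q i‖ ^ 3) * (q j c - q i c) := by
  unfold nbodyF
  rw [coord_add, coord_neg, coord_sum]
  exact congrArg (-q i c + ·) (Finset.sum_congr rfl fun j _ => rfl)

lemma angmom (m : Fin n → ℝ) (q : Fin n → Pt d) (a b : Fin d) :
    ∑ i, m i * (q i a * nbodyF m q i b - q i b * nbodyF m q i a) = 0 := by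
  have hterm : ∀ i : Fin n, m i * (q i a * nbodyF m q i b - q i b * nbodyF m q i a)
      = ∑ j ∈ Finset.univ.erase i, (m i * (m j / ‖q j - q i‖ ^ 3) *
          (q i a * q j b - q i b * q j a)) := by
    intro i
    rw [nbodyF_coord, nbodyF_coord]
    set Sb := ∑ j ∈ Finset.univ.erase i, (m j / ‖q j - q i‖ ^ 3) * (q j b - q i b) with hSb
    set Sa := ∑ j ∈ Finset.univ.erase i, (m j / ‖q j - q i‖ ^ 3) * (q j a - q i a) with hSa
    have expand : m i * (q i a * (-(q i b) + Sb) - q i b * (-(q i a) + Sa))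
        = (m i * q i a) * Sb - (m i * q i b) * Sa := by ring
    rw [expand, hSb, hSa, Finset.mul_sum, Finset.mul_sum, ← Finset.sum_sub_distrib]
    exact Finset.sum_congr rfl fun j _ => by ring
  rw [Finset.sum_congr rfl fun i _ => hterm i]
  apply sum_erase_antisymm
  intro i j
  rw [norm_sub_rev]
  ring

lemma force_sum (m : Fin n → ℝ) (q : Fin n → Pt d) (c : Fin d) :
    ∑ i, m i * nbodyF m q i c = - ∑ i, m i * q i c := by
  have hterm : ∀ i : Fin n, m i * nbodyF m q i c
      = -(m i * q i c) + ∑ j ∈ Finset.univ.erase i,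
          (m i * (m j / ‖q j - q i‖ ^ 3) * (q j c - q i c)) := by
    intro i
    rw [nbodyF_coord, mul_add, Finset.mul_sum]
    congr 1
    · ring
    · exact Finset.sum_congr rfl fun j _ => by ring
  rw [Finset.sum_congr rfl fun i _ => hterm i, Finset.sum_add_distrib,
    sum_erase_antisymm (fun i j => m i * (m j / ‖q j - q i‖ ^ 3) * (q j c - q i c))
      (fun i j => by
        show m i * (m j / ‖q j - q i‖ ^ 3) * (q j c - q i c)
          = - (m j * (m i / ‖q i - q j‖ ^ 3) * (q i c - q j c))
        rw [norm_sub_rev]; ring),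
    add_zero, Finset.sum_neg_distrib]

lemma sum_fin_split {N : ℕ} (hN : 0 < N) (f : Fin N → ℝ) :
    ∑ i, f i = (∑ j : Fin (N - 1), f (emb j)) + f ⟨N - 1, Nat.sub_lt hN one_pos⟩ := by
  rcases N with _ | N
  · omega
  · rw [Fin.sum_univ_castSucc]
    rfl

lemma com_extend (m : Fin n → ℝ) (hn : 0 < n)
    (hmn : m ⟨n - 1, Nat.sub_lt hn one_pos⟩ ≠ 0)
    (qbar : Fin (n - 1) → Pt d) (c : Fin d) :
    ∑ i, m i * extendConfig m qbar i c = 0 := by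
  rw [sum_fin_split hn]
  have h1 : ∀ j : Fin (n - 1), extendConfig m qbar (emb j) = qbar j := extendConfig_emb m qbar
  have h2 : extendConfig m qbar ⟨n - 1, Nat.sub_lt hn one_pos⟩ c
      = -(1 / m ⟨n - 1, Nat.sub_lt hn one_pos⟩) * ∑ j, m (emb j) * qbar j c := by
    unfold extendConfig
    rw [dif_neg (show ¬ ((⟨n - 1, Nat.sub_lt hn one_pos⟩ : Fin n) : ℕ) < n - 1
      from Nat.lt_irrefl _)]
    rw [coord_smul, coord_sum]
    exact congrArg (-(1 / m ⟨n - 1, Nat.sub_lt hn one_pos⟩) * ·)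
      (Finset.sum_congr rfl fun j _ => rfl)
  rw [h2]
  rw [Finset.sum_congr rfl fun j _ => by rw [h1 j]]
  field_simp
  ring

lemma angmom_red (m : Fin n → ℝ) (hn : 0 < n)
    (hmn : m ⟨n - 1, Nat.sub_lt hn one_pos⟩ ≠ 0)
    (qbar : Fin (n - 1) → Pt d) (a b : Fin d) :
    ∑ i : Fin (n - 1), m (emb i) *
      ((qbar i a - extendConfig m qbar ⟨n - 1, Nat.sub_lt hn one_pos⟩ a) * Fred m qbar i b
       - (qbar i b - extendConfig m qbar ⟨n - 1, Nat.sub_lt hn one_pos⟩ b) * Fred m qbar i a)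
      = 0 := by
  set q : Fin n → Pt d := extendConfig m qbar with hq
  set nn : Fin n := ⟨n - 1, Nat.sub_lt hn one_pos⟩ with hnn
  have hqe : ∀ i : Fin (n - 1), qbar i = q (emb i) := fun i => (extendConfig_emb m qbar i).symm
  have hA : (∑ j : Fin (n - 1), (m (emb j) * (q (emb j) a * nbodyF m q (emb j) b
        - q (emb j) b * nbodyF m q (emb j) a)))
      = - (m nn * (q nn a * nbodyF m q nn b - q nn b * nbodyF m q nn a)) := by
    have h0 := angmom m q a b
    rw [sum_fin_split hn] at h0
    linarith
  have hB : ∀ c : Fin d, (∑ j : Fin (n - 1), m (emb j) * nbodyF m q (emb j) c)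
      = - (m nn * nbodyF m q nn c) := by
    intro c
    have h0 := force_sum m q c
    have h1 : ∑ i, m i * q i c = 0 := com_extend m hn hmn qbar c
    rw [h1, neg_zero] at h0
    rw [sum_fin_split hn] at h0
    linarith
  have hgoal : ∀ i : Fin (n - 1), m (emb i) *
      ((qbar i a - q nn a) * Fred m qbar i b - (qbar i b - q nn b) * Fred m qbar i a)
      = (m (emb i) * (q (emb i) a * nbodyF m q (emb i) b
          - q (emb i) b * nbodyF m q (emb i) a))
        - q nn a * (m (emb i) * nbodyF m q (emb i) b)
        + q nn b * (m (emb i) * nbodyF m q (emb i) a) := by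
    intro i
    rw [hqe i]
    show m (emb i) * ((q (emb i) a - q nn a) * nbodyF m q (emb i) b
      - (q (emb i) b - q nn b) * nbodyF m q (emb i) a) = _
    ring
  rw [Finset.sum_congr rfl (fun i _ => hgoal i), Finset.sum_add_distrib,
    Finset.sum_sub_distrib, ← Finset.mul_sum, ← Finset.mul_sum, hA, hB a, hB b]
  ring

lemma left_kernel (m : Fin n → ℝ) (hn : 0 < n)
    (hmn : m ⟨n - 1, Nat.sub_lt hn one_pos⟩ ≠ 0)
    {qbar : Fin (n - 1) → Pt d} (hq : CollisionFree (extendConfig m qbar))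
    (hF : ∀ i, Fred m qbar i = 0) (a b : Fin d) (u : Fin (n - 1) → Pt d) :
    ∑ i : Fin (n - 1), m (emb i) *
      ((qbar i a - extendConfig m qbar ⟨n - 1, Nat.sub_lt hn one_pos⟩ a) *
          fderiv ℝ (fun q' => Fred m q' i b) qbar u
        - (qbar i b - extendConfig m qbar ⟨n - 1, Nat.sub_lt hn one_pos⟩ b) *
          fderiv ℝ (fun q' => Fred m q' i a) qbar u) = 0 := by
  set nn : Fin n := ⟨n - 1, Nat.sub_lt hn one_pos⟩ with hnn
  set Lc : Fin (n - 1) → Fin d → ((Fin (n - 1) → Pt d) →L[ℝ] ℝ) := fun i c =>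
    (EuclideanSpace.proj (𝕜 := ℝ) c).comp
      ((ContinuousLinearMap.proj i : (Fin (n - 1) → Pt d) →L[ℝ] Pt d) - extendCLM m nn)
    with hLc
  have hlin : ∀ (i : Fin (n - 1)) (c : Fin d), HasFDerivAt
      (fun q' : Fin (n - 1) → Pt d => q' i c - extendConfig m q' nn c) (Lc i c) qbar := by
    intro i c
    have heq : (fun q' : Fin (n - 1) → Pt d => q' i c - extendConfig m q' nn c)
        = fun q' => Lc i c q' := by
      funext q'
      rw [extendConfig_apply]
      rfl
    rw [heq]
    exact ContinuousLinearMap.hasFDerivAt _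
  have hFc : ∀ (i : Fin (n - 1)) (c : Fin d), HasFDerivAt (fun q' => Fred m q' i c)
      (fderiv ℝ (fun q' => Fred m q' i c) qbar) qbar :=
    fun i c => (diffAt_Fred_coord m hq i c).hasFDerivAt
  have hbig : HasFDerivAt (fun q' : Fin (n - 1) → Pt d => ∑ i : Fin (n - 1), m (emb i) *
      ((q' i a - extendConfig m q' nn a) * Fred m q' i b
        - (q' i b - extendConfig m q' nn b) * Fred m q' i a))
      (∑ i : Fin (n - 1), m (emb i) • ((((qbar i a - extendConfig m qbar nn a) •
          fderiv ℝ (fun q' => Fred m q' i b) qbar) + (Fred m qbar i b • Lc i a))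
        - (((qbar i b - extendConfig m qbar nn b) •
          fderiv ℝ (fun q' => Fred m q' i a) qbar) + (Fred m qbar i a • Lc i b)))) qbar := by
    apply HasFDerivAt.fun_sum
    intro i _
    exact (((hlin i a).mul (hFc i b)).sub ((hlin i b).mul (hFc i a))).const_mul (m (emb i))
  have hG0 : (fun q' : Fin (n - 1) → Pt d => ∑ i : Fin (n - 1), m (emb i) *
      ((q' i a - extendConfig m q' nn a) * Fred m q' i b
        - (q' i b - extendConfig m q' nn b) * Fred m q' i a)) = fun _ => (0 : ℝ) :=
    funext fun q' => angmom_red m hn hmn q' a b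
  rw [hG0] at hbig
  have huniq := hbig.unique (hasFDerivAt_const 0 qbar)
  have happ := congrFun (congrArg DFunLike.coe huniq) u
  have hF' : ∀ (i : Fin (n - 1)) (c : Fin d), Fred m qbar i c = 0 := by
    intro i c
    rw [hF i]
    rfl
  simp only [ContinuousLinearMap.coe_sum', Finset.sum_apply,
    ContinuousLinearMap.coe_smul', Pi.smul_apply, ContinuousLinearMap.sub_apply,
    ContinuousLinearMap.add_apply, ContinuousLinearMap.smul_apply, hF', zero_smul,
    add_zero, ContinuousLinearMap.zero_apply, smul_eq_mul] at happ
  rw [← happ]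

lemma jacFred_vecMul (m : Fin n → ℝ) (hn : 0 < n)
    (hmn : m ⟨n - 1, Nat.sub_lt hn one_pos⟩ ≠ 0)
    {qbar : Fin (n - 1) → Pt d} (hq : CollisionFree (extendConfig m qbar))
    (hF : ∀ i, Fred m qbar i = 0) (a b : Fin d) (hab : a ≠ b) :
    Matrix.vecMul (fun p : Fin (n - 1) × Fin d => m (emb p.1) *
      ((if p.2 = b then qbar p.1 a - extendConfig m qbar ⟨n - 1, Nat.sub_lt hn one_pos⟩ a
          else 0)
        - (if p.2 = a then qbar p.1 b - extendConfig m qbar ⟨n - 1, Nat.sub_lt hn one_pos⟩ b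
          else 0))) (jacFred m qbar) = 0 := by
  funext p'
  simp only [Matrix.vecMul, dotProduct, Pi.zero_apply]
  rw [Fintype.sum_prod_type]
  set nn : Fin n := ⟨n - 1, Nat.sub_lt hn one_pos⟩ with hnn
  have hinner : ∀ i : Fin (n - 1),
      (∑ c : Fin d, (m (emb i) * ((if c = b then qbar i a - extendConfig m qbar nn a else 0)
          - (if c = a then qbar i b - extendConfig m qbar nn b else 0)))
        * jacFred m qbar (i, c) p')
      = m (emb i) *
        ((qbar i a - extendConfig m qbar nn a) * jacFred m qbar (i, b) p'
          - (qbar i b - extendConfig m qbar nn b) * jacFred m qbar (i, a) p') := by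
    intro i
    have hsplit : ∀ c : Fin d,
        (m (emb i) * ((if c = b then qbar i a - extendConfig m qbar nn a else 0)
          - (if c = a then qbar i b - extendConfig m qbar nn b else 0)))
          * jacFred m qbar (i, c) p'
        = (if c = b then m (emb i) * ((qbar i a - extendConfig m qbar nn a)
              * jacFred m qbar (i, c) p') else 0)
          - (if c = a then m (emb i) * ((qbar i b - extendConfig m qbar nn b)
              * jacFred m qbar (i, c) p') else 0) := by
      intro c
      by_cases h1 : c = a <;> by_cases h2 : c = b
      · exact absurd (h1 ▸ h2) hab
      · simp [h1, h2, hab, hab.symm]; ring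
      · simp [h1, h2, hab, hab.symm]; ring
      · simp [h1, h2]
    rw [Finset.sum_congr rfl fun c _ => hsplit c, Finset.sum_sub_distrib,
      Finset.sum_ite_eq' Finset.univ b, Finset.sum_ite_eq' Finset.univ a]
    simp only [Finset.mem_univ, if_true]
    ring
  rw [Finset.sum_congr rfl fun i _ => hinner i]
  have hlk := left_kernel m hn hmn hq hF a b
    (Pi.single p'.1 (EuclideanSpace.single p'.2 (1 : ℝ)))
  exact hlk

lemma det3 (a b c d e f g h i : ℝ) :
    (!![a, b, c; d, e, f; g, h, i]).det
      = a*e*i - a*f*h - b*d*i + b*f*g + c*d*h - c*e*g := by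
  simp [Matrix.det_fin_three]

/-! ### Rank lemmas -/

lemma mulVec_subtype {o ι : Type*} [Fintype o] [Fintype ι] (M : Matrix o ι ℝ)
    (P : ι → Prop) [DecidablePred P] (z : ι → ℝ) (hz : ∀ i, ¬ P i → z i = 0) :
    M.mulVec z = (M.submatrix id (Subtype.val : {i // P i} → ι)).mulVec (fun k => z k.val) := by
  funext o1
  simp only [Matrix.mulVec, dotProduct, Matrix.submatrix_apply, id_eq]
  rw [← Fintype.sum_subtype_add_sum_subtype P (fun i => M o1 i * z i)]
  have : (∑ i : {x // ¬ P x}, M o1 i.val * z i.val) = 0 := by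
    apply Finset.sum_eq_zero; intro i _; rw [hz i.val i.prop, mul_zero]
  rw [this, add_zero]

lemma rank_submatrix_col {o ι : Type*} [Fintype o] [Fintype ι] [DecidableEq ι]
    (M : Matrix o ι ℝ) (P : ι → Prop) [DecidablePred P]
    (r : Fin 3 → ι) (hcov : ∀ i, ¬ P i → ∃ s, i = r s)
    (v : Fin 3 → ι → ℝ) (hv : ∀ t, M.mulVec (v t) = 0)
    (hdet : (Matrix.of fun s t => v t (r s)).det ≠ 0) :
    (M.submatrix id (Subtype.val : {i // P i} → ι)).rank = M.rank := by
  have hrange : LinearMap.range (M.submatrix id (Subtype.val : {i // P i} → ι)).mulVecLin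
      = LinearMap.range M.mulVecLin := by
    apply le_antisymm
    · rintro y ⟨x, rfl⟩
      refine ⟨fun i => if h : P i then x ⟨i, h⟩ else 0, ?_⟩
      have hxx : (fun k : {i // P i} => if h : P k.val then x ⟨k.val, h⟩ else 0) = x := by
        funext k; rw [dif_pos k.prop]
      rw [Matrix.mulVecLin_apply, Matrix.mulVecLin_apply,
        mulVec_subtype M P _ (fun i hi => dif_neg hi), hxx]
    · rintro y ⟨x, rfl⟩
      set K : Matrix (Fin 3) (Fin 3) ℝ := Matrix.of fun s t => v t (r s) with hK
      set c : Fin 3 → ℝ := K⁻¹.mulVec (fun s => x (r s)) with hc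
      set x' : ι → ℝ := x - ∑ t, c t • v t with hx'def
      have hKc : K.mulVec c = fun s => x (r s) := by
        rw [hc, Matrix.mulVec_mulVec, Matrix.mul_nonsing_inv _ (isUnit_iff_ne_zero.2 hdet),
          Matrix.one_mulVec]
      have hx' : ∀ i, ¬ P i → x' i = 0 := by
        intro i hi
        obtain ⟨s, rfl⟩ := hcov i hi
        have hs := congrFun hKc s
        simp only [Matrix.mulVec, dotProduct, hK, Matrix.of_apply] at hs
        simp only [hx'def, Pi.sub_apply, Finset.sum_apply, Pi.smul_apply, smul_eq_mul]
        rw [← hs]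
        ring_nf
        rw [Finset.sum_congr rfl (fun t _ => mul_comm (v t (r s)) (c t))]
        ring
      have hMx : M.mulVec x = M.mulVec x' := by
        rw [hx'def]
        rw [Matrix.mulVec_sub]
        have : M.mulVec (∑ t, c t • v t) = 0 := by
          rw [← Matrix.mulVecLin_apply, map_sum]
          simp only [_root_.map_smul, Matrix.mulVecLin_apply, hv, smul_zero,
            Finset.sum_const_zero]
        rw [this, sub_zero]
      refine ⟨fun k => x' k.val, ?_⟩
      rw [Matrix.mulVecLin_apply, ← mulVec_subtype M P x' hx', ← hMx, Matrix.mulVecLin_apply]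
  rw [Matrix.rank, Matrix.rank, hrange]

lemma rank_submatrix_eq {ι : Type*} [Fintype ι] [DecidableEq ι]
    (M : Matrix ι ι ℝ) (P : ι → Prop) [DecidablePred P]
    (r : Fin 3 → ι) (hcov : ∀ i, ¬ P i → ∃ s, i = r s)
    (v w : Fin 3 → ι → ℝ) (hv : ∀ t, M.mulVec (v t) = 0)
    (hw : ∀ t, Matrix.vecMul (w t) M = 0)
    (hdetv : (Matrix.of fun s t => v t (r s)).det ≠ 0)
    (hdetw : (Matrix.of fun s t => w t (r s)).det ≠ 0) :
    (M.submatrix (Subtype.val : {i // P i} → ι) (Subtype.val : {i // P i} → ι)).rank = M.rank := by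
  set N : Matrix {i // P i} ι ℝ := M.submatrix Subtype.val id with hN
  have hv' : ∀ t, N.mulVec (v t) = 0 := by
    intro t; funext k
    have := congrFun (hv t) k.val
    simpa [hN, Matrix.mulVec, dotProduct] using this
  have step1 : (M.submatrix (Subtype.val : {i // P i} → ι)
      (Subtype.val : {i // P i} → ι)).rank = N.rank := by
    have : M.submatrix (Subtype.val : {i // P i} → ι) (Subtype.val : {i // P i} → ι)
        = N.submatrix id (Subtype.val : {i // P i} → ι) := by
      rw [hN, Matrix.submatrix_submatrix]; rfl
    rw [this]
    exact rank_submatrix_col N P r hcov v hv' hdetv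
  have hw' : ∀ t, Matrix.mulVec Mᵀ (w t) = 0 := by
    intro t; rw [Matrix.mulVec_transpose, hw]
  have step2 : N.rank = M.rank := by
    have h1 : N.rank = Nᵀ.rank := (Matrix.rank_transpose N).symm
    have h2 : Nᵀ = Mᵀ.submatrix id (Subtype.val : {i // P i} → ι) := by
      rw [hN, Matrix.transpose_submatrix]
    rw [h1, h2, rank_submatrix_col Mᵀ P r hcov w hw' hdetw, Matrix.rank_transpose]
  rw [step1, step2]

end Stmt10Aux


open Stmt10Aux

/-- for a spatial nCC with the normalization `y_{n−1} = z_{n−1} = z_{n−2} = 0`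
and the non-degeneracy conditions on coordinates, `rank(D RS) = rank(DF^red(q̄))`. -/
theorem stmt10 {n : ℕ} (hn : 4 ≤ n) (m : Fin n → ℝ) (hm : ∀ i, 0 < m i)
    (qbar : Fin (n - 1) → Pt 3) (hcc : IsNCC m (extendConfig m qbar))
    (hy1 : qbar ⟨n - 2, by omega⟩ 1 = 0) (hz1 : qbar ⟨n - 2, by omega⟩ 2 = 0)
    (hz2 : qbar ⟨n - 3, by omega⟩ 2 = 0)
    (hx1 : qbar ⟨n - 2, by omega⟩ 0 - extendConfig m qbar ⟨n - 1, by omega⟩ 0 ≠ 0)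
    (hx2 : qbar ⟨n - 2, by omega⟩ 0 ≠ 0)
    (hy2 : qbar ⟨n - 3, by omega⟩ 1 ≠ 0)
    (hdet :
      (!![qbar ⟨n - 3, by omega⟩ 1 - extendConfig m qbar ⟨n - 1, by omega⟩ 1,
          qbar ⟨n - 2, by omega⟩ 1 - extendConfig m qbar ⟨n - 1, by omega⟩ 1;
          qbar ⟨n - 3, by omega⟩ 0 - extendConfig m qbar ⟨n - 1, by omega⟩ 0,
          qbar ⟨n - 2, by omega⟩ 0 - extendConfig m qbar ⟨n - 1, by omega⟩ 0]).det ≠ 0) :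
    (DRS3 hn m qbar).rank = (jacFred m qbar).rank := by
  have hn0 : 0 < n := by omega
  have hmn : m ⟨n - 1, Nat.sub_lt hn0 one_pos⟩ ≠ 0 := (hm _).ne'
  have hcf : CollisionFree (extendConfig m qbar) := hcc.1
  have hF : ∀ i, Fred m qbar i = 0 := fun i => congrFun hcc.2.2 (emb i)
  have hA2 : n - 2 < n - 1 := by omega
  have hB2 : n - 3 < n - 1 := by omega
  set A : Fin (n - 1) := ⟨n - 2, hA2⟩ with hAdef
  set B : Fin (n - 1) := ⟨n - 3, hB2⟩ with hBdef
  set nn : Fin n := ⟨n - 1, Nat.sub_lt hn0 one_pos⟩ with hnndef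
  -- the right-kernel vectors
  set v : Fin 3 → (Fin (n - 1) × Fin 3) → ℝ :=
    ![fun p => rotA 0 1 (qbar p.1) p.2,
      fun p => rotA 0 2 (qbar p.1) p.2,
      fun p => rotA 1 2 (qbar p.1) p.2] with hvdef
  -- the left-kernel vectors
  set w : Fin 3 → (Fin (n - 1) × Fin 3) → ℝ :=
    ![fun p => m (emb p.1) * ((if p.2 = 1 then qbar p.1 0 - extendConfig m qbar nn 0 else 0)
        - (if p.2 = 0 then qbar p.1 1 - extendConfig m qbar nn 1 else 0)),
      fun p => m (emb p.1) * ((if p.2 = 2 then qbar p.1 0 - extendConfig m qbar nn 0 else 0)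
        - (if p.2 = 0 then qbar p.1 2 - extendConfig m qbar nn 2 else 0)),
      fun p => m (emb p.1) * ((if p.2 = 2 then qbar p.1 1 - extendConfig m qbar nn 1 else 0)
        - (if p.2 = 1 then qbar p.1 2 - extendConfig m qbar nn 2 else 0))] with hwdef
  set r : Fin 3 → (Fin (n - 1) × Fin 3) := ![(A, 1), (A, 2), (B, 2)] with hrdef
  have hv : ∀ t, (jacFred m qbar).mulVec (v t) = 0 := by
    intro t
    fin_cases t
    · exact jacFred_mulVec_rot m hcf hF 0 1 (by decide)
    · exact jacFred_mulVec_rot m hcf hF 0 2 (by decide)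
    · exact jacFred_mulVec_rot m hcf hF 1 2 (by decide)
  have hw : ∀ t, Matrix.vecMul (w t) (jacFred m qbar) = 0 := by
    intro t
    fin_cases t
    · exact jacFred_vecMul m hn0 hmn hcf hF 0 1 (by decide)
    · exact jacFred_vecMul m hn0 hmn hcf hF 0 2 (by decide)
    · exact jacFred_vecMul m hn0 hmn hcf hF 1 2 (by decide)
  have hcov : ∀ p : Fin (n - 1) × Fin 3,
      ¬ (p ≠ (⟨n - 2, by omega⟩, 1) ∧ p ≠ (⟨n - 2, by omega⟩, 2) ∧ p ≠ (⟨n - 3, by omega⟩, 2))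
      → ∃ s, p = r s := by
    intro p hp
    by_cases h1 : p = (A, 1)
    · exact ⟨0, h1⟩
    by_cases h2 : p = (A, 2)
    · exact ⟨1, h2⟩
    by_cases h3 : p = (B, 2)
    · exact ⟨2, h3⟩
    exact absurd ⟨h1, h2, h3⟩ hp
  have hdetv : (Matrix.of fun s t => v t (r s)).det ≠ 0 := by
    have hmat : (Matrix.of fun s t => v t (r s))
        = !![qbar A 0, 0, 0; 0, qbar A 0, 0; 0, qbar B 0, qbar B 1] := by
      ext s t
      fin_cases s <;> fin_cases t <;>
        simp [hvdef, hrdef, rotA_apply, hy1, hz1, Matrix.cons_val_zero, Matrix.cons_val_one,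
          Matrix.vecHead, Matrix.vecTail]
    rw [hmat]
    simp [Matrix.det_fin_three]
    exact ⟨hx2, hy2⟩
  have hdet2 : (qbar B 1 - extendConfig m qbar nn 1) * (qbar A 0 - extendConfig m qbar nn 0)
      - (qbar A 1 - extendConfig m qbar nn 1) * (qbar B 0 - extendConfig m qbar nn 0) ≠ 0 := by
    rw [Matrix.det_fin_two_of] at hdet
    exact hdet
  have hdetw : (Matrix.of fun s t => w t (r s)).det ≠ 0 := by
    have hmatw : (Matrix.of fun s t => w t (r s))
        = !![m (emb A) * (qbar A 0 - extendConfig m qbar nn 0), 0,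
              m (emb A) * (extendConfig m qbar nn 2 - qbar A 2);
            0, m (emb A) * (qbar A 0 - extendConfig m qbar nn 0),
              m (emb A) * (qbar A 1 - extendConfig m qbar nn 1);
            0, m (emb B) * (qbar B 0 - extendConfig m qbar nn 0),
              m (emb B) * (qbar B 1 - extendConfig m qbar nn 1)] := by
      ext s t
      fin_cases s <;> fin_cases t <;>
        simp [hwdef, hrdef, Matrix.vecHead, Matrix.vecTail]
    rw [hmatw, det3]
    have hprod : m (emb A) * m (emb A) * m (emb B) * ((qbar A 0 - extendConfig m qbar nn 0) *
        ((qbar B 1 - extendConfig m qbar nn 1) * (qbar A 0 - extendConfig m qbar nn 0)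
          - (qbar A 1 - extendConfig m qbar nn 1)
            * (qbar B 0 - extendConfig m qbar nn 0))) ≠ 0 :=
      mul_ne_zero (mul_ne_zero (mul_ne_zero (hm _).ne' (hm _).ne') (hm _).ne')
        (mul_ne_zero hx1 hdet2)
    intro h
    exact hprod (by linear_combination h)
  exact rank_submatrix_eq (jacFred m qbar)
    (fun p => p ≠ (⟨n - 2, by omega⟩, 1) ∧ p ≠ (⟨n - 2, by omega⟩, 2)
      ∧ p ≠ (⟨n - 3, by omega⟩, 2))
    r hcov v w hv hw hdetv hdetw
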